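/- (Partial error exponent bound.) Let a BIOS memoryless channel have finite output alphabet 𝒴 and transition probabilities P(·|0), P(·|1). Suppose the all-zero codeword 0 ∈ F₂^N is transmitted, i.e. Y ∈ 𝒴^N is random with distribution ∏_{j=1}^N P(y_j|0). Let X_1,…,X_L be F₂^N-valued random vectors, jointly independent of Y, such that for each i the N components of X_i are i.i.d. Bernoulli(p) (no independence between different X_i is assumed). Set R = (log₂ L)/N. Then the probability that some X_i is at least as likely as 0 satisfies Pr{∃ i ∈ {1,…,L} : ∏_{j=1}^N P(Y_j|X_{i,j}) ≥ ∏_{j=1}^N P(Y_j|0)} ≤ 2^{−N·E(p,R)}. -/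
import Mathlib


open scoped Classical
open Finset

/-- Gallager-type function
`E_0(p,γ) = −log₂ Σ_y P(y|0)^{1/(1+γ)}·[(1−p)·P(y|0)^{1/(1+γ)} + p·P(y|1)^{1/(1+γ)}]^γ`. -/
noncomputable def gallagerE0 {𝒴 : Type} [Fintype 𝒴] (P : ZMod 2 → 𝒴 → ℝ)
    (p γ : ℝ) : ℝ :=
  -Real.logb 2 (∑ y : 𝒴, P 0 y ^ ((1 : ℝ) / (1 + γ)) *
    ((1 - p) * P 0 y ^ ((1 : ℝ) / (1 + γ)) + p * P 1 y ^ ((1 : ℝ) / (1 + γ))) ^ γ)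

/-- Partial error exponent `E(p,R) = max_{γ∈[0,1]} (E_0(p,γ) − γ·R)`. -/
noncomputable def partialErrorExponent {𝒴 : Type} [Fintype 𝒴] (P : ZMod 2 → 𝒴 → ℝ)
    (p R : ℝ) : ℝ :=
  sSup ((fun γ => gallagerE0 P p γ - γ * R) '' Set.Icc (0 : ℝ) 1)

/-- Jensen inequality for the concave map `t ↦ t^γ`, `γ ∈ [0,1]`. -/
lemma jensen_rpow_aux {ι : Type*} [Fintype ι] (w z : ι → ℝ) (hw : ∀ i, 0 ≤ w i)
    (hw' : ∑ i, w i = 1) (hz : ∀ i, 0 ≤ z i) {γ : ℝ} (hγ0 : 0 ≤ γ) (hγ1 : γ ≤ 1) :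
    ∑ i, w i * z i ^ γ ≤ (∑ i, w i * z i) ^ γ := by
  rcases eq_or_lt_of_le hγ0 with h0 | h0
  · simp [← h0, hw']
  · have hp : 1 ≤ 1 / γ := by rw [le_div_iff₀ h0]; linarith
    have h := Real.arith_mean_le_rpow_mean Finset.univ w (fun i => z i ^ γ)
      (fun i _ => hw i) hw' (fun i _ => Real.rpow_nonneg (hz i) γ) hp
    calc ∑ i, w i * z i ^ γ
        ≤ (∑ i, w i * (z i ^ γ) ^ (1 / γ)) ^ (1 / (1 / γ)) := h
      _ = (∑ i, w i * z i) ^ γ := by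
          rw [one_div_one_div]
          congr 1
          refine Finset.sum_congr rfl fun i _ => ?_
          rw [← Real.rpow_mul (hz i), mul_one_div_cancel h0.ne', Real.rpow_one]

/-- **Partial error exponent bound.**
Suppose the all-zero codeword of length `N` is transmitted over a BIOS channel, and
`X_1,…,X_L` are random binary vectors, jointly independent of the channel output `Y`
(joint distribution `Q`), such that each `X_i` has i.i.d. Bernoulli(p) components (no
independence between different `X_i` assumed). Then the probability that some `X_i` is
at least as likely as `0` given `Y` is at most `2^{−N·E(p,R)}` with `R = (log₂ L)/N`. -/
theorem partial_error_exponent_bound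
    (𝒴 : Type) [Fintype 𝒴]
    (P : ZMod 2 → 𝒴 → ℝ) (π : 𝒴 → 𝒴)
    (hPnonneg : ∀ x y, 0 ≤ P x y) (hPsum : ∀ x, ∑ y : 𝒴, P x y = 1)
    (hπ : ∀ y, π (π y) = y) (hsym : ∀ y, P 1 y = P 0 (π y))
    (N L : ℕ) (hN : 0 < N) (hL : 0 < L)
    (p : ℝ) (hp0 : 0 ≤ p) (hp1 : p ≤ 1)
    (Q : (Fin L → Fin N → ZMod 2) → ℝ)
    (hQnonneg : ∀ xs, 0 ≤ Q xs) (hQsum : ∑ xs, Q xs = 1)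
    -- each X_i has i.i.d. Bernoulli(p) components
    (hmarginal : ∀ (i : Fin L) (x : Fin N → ZMod 2),
      (∑ xs, Q xs * (if xs i = x then 1 else 0))
        = ∏ j, (if x j = 1 then p else 1 - p)) :
    ∑ xs : Fin L → Fin N → ZMod 2, ∑ y : Fin N → 𝒴,
      (Q xs * (∏ j, P 0 (y j)) *
        (if ∃ i : Fin L, (∏ j, P 0 (y j)) ≤ ∏ j, P (xs i j) (y j) then 1 else 0))
    ≤ (2 : ℝ) ^ (-(N : ℝ) * partialErrorExponent P p (Real.logb 2 L / N)) := by
  have hN' : (0 : ℝ) < N := by exact_mod_cast hN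
  have hL' : (0 : ℝ) < L := by exact_mod_cast hL
  set R : ℝ := Real.logb 2 L / N with hR
  set F : ℝ := ∑ xs : Fin L → Fin N → ZMod 2, ∑ y : Fin N → 𝒴,
      (Q xs * (∏ j, P 0 (y j)) *
        (if ∃ i : Fin L, (∏ j, P 0 (y j)) ≤ ∏ j, P (xs i j) (y j) then 1 else 0)) with hF
  have hF0 : 0 ≤ F := by
    rw [hF]
    refine Finset.sum_nonneg fun xs _ => Finset.sum_nonneg fun y _ => ?_
    have hW : 0 ≤ ∏ j, P 0 (y j) := Finset.prod_nonneg fun j _ => hPnonneg 0 (y j)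
    have hind : (0:ℝ) ≤
        (if ∃ i : Fin L, (∏ j, P 0 (y j)) ≤ ∏ j, P (xs i j) (y j) then 1 else 0) := by
      split <;> norm_num
    exact mul_nonneg (mul_nonneg (hQnonneg xs) hW) hind
  -- Main per-γ bound
  have key : ∀ γ : ℝ, γ ∈ Set.Icc (0:ℝ) 1 →
      F ≤ (2 : ℝ) ^ (-(N : ℝ) * (gallagerE0 P p γ - γ * R)) := by
    rintro γ ⟨hγ0, hγ1⟩
    have h1γ : (0:ℝ) < 1 + γ := by linarith
    set s : ℝ := (1 : ℝ) / (1 + γ) with hs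
    have hs0 : 0 < s := by positivity
    have hss : s + s * γ = 1 := by rw [hs]; field_simp
    set μ : 𝒴 → ℝ := fun z => (1 - p) * P 0 z ^ s + p * P 1 z ^ s with hμ
    have hμ0 : ∀ z, 0 ≤ μ z := by
      intro z
      have h1 := Real.rpow_nonneg (hPnonneg 0 z) s
      have h2 := Real.rpow_nonneg (hPnonneg 1 z) s
      have h3 : (0:ℝ) ≤ 1 - p := by linarith
      rw [hμ]
      dsimp only
      positivity
    set A : ℝ := ∑ z : 𝒴, P 0 z ^ s * μ z ^ γ with hA
    have hA0 : 0 ≤ A := by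
      rw [hA]
      exact Finset.sum_nonneg fun z _ =>
        mul_nonneg (Real.rpow_nonneg (hPnonneg 0 z) s) (Real.rpow_nonneg (hμ0 z) γ)
    have hE0 : gallagerE0 P p γ = -Real.logb 2 A := by
      rw [hA, hμ, hs, gallagerE0]
    -- Step 1 : pointwise bound replacing the indicator
    have step1 : ∀ (xs : Fin L → Fin N → ZMod 2) (y : Fin N → 𝒴),
        (∏ j, P 0 (y j)) *
          (if ∃ i : Fin L, (∏ j, P 0 (y j)) ≤ ∏ j, P (xs i j) (y j) then 1 else 0)
        ≤ (∏ j, P 0 (y j)) ^ s * (∑ i, (∏ j, P (xs i j) (y j)) ^ s) ^ γ := by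
      intro xs y
      set W : ℝ := ∏ j, P 0 (y j) with hW
      have hWnn : 0 ≤ W := Finset.prod_nonneg fun j _ => hPnonneg 0 (y j)
      set T : ℝ := ∑ i, (∏ j, P (xs i j) (y j)) ^ s with hT
      have hTnn : 0 ≤ T := Finset.sum_nonneg fun i _ =>
        Real.rpow_nonneg (Finset.prod_nonneg fun j _ => hPnonneg _ _) s
      have hRHS : 0 ≤ W ^ s * T ^ γ :=
        mul_nonneg (Real.rpow_nonneg hWnn s) (Real.rpow_nonneg hTnn γ)
      split
      · rename_i hex
        obtain ⟨i, hi⟩ := hex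
        rcases hWnn.eq_or_lt with hW0 | hW0
        · rw [mul_one, ← hW0]
          exact mul_nonneg (Real.rpow_nonneg le_rfl s) (Real.rpow_nonneg hTnn γ)
        · have hWi : W ^ s ≤ T := by
            refine le_trans (Real.rpow_le_rpow hWnn hi hs0.le) ?_
            exact Finset.single_le_sum
              (f := fun i => (∏ j, P (xs i j) (y j)) ^ s)
              (fun i _ => Real.rpow_nonneg (Finset.prod_nonneg fun j _ => hPnonneg _ _) s)
              (Finset.mem_univ i)
          rw [mul_one]
          calc W = W ^ (s + s * γ) := by rw [hss, Real.rpow_one]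
            _ = W ^ s * W ^ (s * γ) := Real.rpow_add hW0 _ _
            _ = W ^ s * (W ^ s) ^ γ := by rw [Real.rpow_mul hWnn]
            _ ≤ W ^ s * T ^ γ := by
                exact mul_le_mul_of_nonneg_left
                  (Real.rpow_le_rpow (Real.rpow_nonneg hWnn s) hWi hγ0)
                  (Real.rpow_nonneg hWnn s)
      · rw [mul_zero]; exact hRHS
    -- marginals: for each i and y, the average of ∏_j P(X_{ij}|y_j)^s
    have hmarg : ∀ (i : Fin L) (y : Fin N → 𝒴),
        ∑ xs, Q xs * ∏ j, P (xs i j) (y j) ^ s = ∏ j, μ (y j) := by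
      intro i y
      calc ∑ xs, Q xs * ∏ j, P (xs i j) (y j) ^ s
          = ∑ xs, ∑ x : Fin N → ZMod 2,
              (Q xs * if xs i = x then 1 else 0) * ∏ j, P (x j) (y j) ^ s := by
            refine Finset.sum_congr rfl fun xs _ => ?_
            rw [Finset.sum_eq_single (xs i)]
            · simp
            · intro x _ hx
              simp [Ne.symm hx]
            · simp
        _ = ∑ x : Fin N → ZMod 2,
              (∑ xs, Q xs * if xs i = x then 1 else 0) * ∏ j, P (x j) (y j) ^ s := by
            rw [Finset.sum_comm]
            simp [Finset.sum_mul]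
        _ = ∑ x : Fin N → ZMod 2,
              (∏ j, (if x j = 1 then p else 1 - p)) * ∏ j, P (x j) (y j) ^ s := by
            refine Finset.sum_congr rfl fun x _ => ?_
            rw [hmarginal i x]
        _ = ∑ x : Fin N → ZMod 2,
              ∏ j, ((if x j = 1 then p else 1 - p) * P (x j) (y j) ^ s) := by
            refine Finset.sum_congr rfl fun x _ => ?_
            rw [Finset.prod_mul_distrib]
        _ = ∏ j, ∑ b : ZMod 2, ((if b = 1 then p else 1 - p) * P b (y j) ^ s) :=
            (Fintype.prod_sum fun j b => (if b = 1 then p else 1 - p) * P b (y j) ^ s).symm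
        _ = ∏ j, μ (y j) := by
            refine Finset.prod_congr rfl fun j _ => ?_
            have hsum2 : ∑ b : ZMod 2, ((if b = 1 then p else 1 - p) * P b (y j) ^ s)
                = (if (0 : ZMod 2) = 1 then p else 1 - p) * P 0 (y j) ^ s
                  + (if (1 : ZMod 2) = 1 then p else 1 - p) * P 1 (y j) ^ s :=
              Fin.sum_univ_two _
            rw [hsum2, if_neg (show (0 : ZMod 2) ≠ 1 by decide), if_pos rfl]
    -- Step 2+3: apply Jensen and the marginal computation
    have step2 : F ≤ ∑ y : Fin N → 𝒴,
        (∏ j, P 0 (y j)) ^ s * ((L : ℝ) * ∏ j, μ (y j)) ^ γ := by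
      have hb : F ≤ ∑ y : Fin N → 𝒴, ∑ xs,
          Q xs * ((∏ j, P 0 (y j)) ^ s * (∑ i, (∏ j, P (xs i j) (y j)) ^ s) ^ γ) := by
        rw [hF, Finset.sum_comm]
        refine Finset.sum_le_sum fun y _ => Finset.sum_le_sum fun xs _ => ?_
        rw [mul_assoc]
        exact mul_le_mul_of_nonneg_left (step1 xs y) (hQnonneg xs)
      refine hb.trans (Finset.sum_le_sum fun y _ => ?_)
      have hWs : 0 ≤ (∏ j, P 0 (y j)) ^ s :=
        Real.rpow_nonneg (Finset.prod_nonneg fun j _ => hPnonneg 0 (y j)) s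
      have hrw : ∑ xs, Q xs * ((∏ j, P 0 (y j)) ^ s *
            (∑ i, (∏ j, P (xs i j) (y j)) ^ s) ^ γ)
          = (∏ j, P 0 (y j)) ^ s *
            ∑ xs, Q xs * (∑ i, (∏ j, P (xs i j) (y j)) ^ s) ^ γ := by
        rw [Finset.mul_sum]
        exact Finset.sum_congr rfl fun xs _ => by ring
      rw [hrw]
      refine mul_le_mul_of_nonneg_left ?_ hWs
      have hT0 : ∀ xs : Fin L → Fin N → ZMod 2,
          0 ≤ ∑ i, (∏ j, P (xs i j) (y j)) ^ s := fun xs =>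
        Finset.sum_nonneg fun i _ =>
          Real.rpow_nonneg (Finset.prod_nonneg fun j _ => hPnonneg _ _) s
      have hjen := jensen_rpow_aux Q (fun xs => ∑ i, (∏ j, P (xs i j) (y j)) ^ s)
        hQnonneg hQsum hT0 hγ0 hγ1
      refine hjen.trans ?_
      have hmean : ∑ xs, Q xs * (∑ i, (∏ j, P (xs i j) (y j)) ^ s)
          = (L : ℝ) * ∏ j, μ (y j) := by
        calc ∑ xs, Q xs * ∑ i, (∏ j, P (xs i j) (y j)) ^ s
            = ∑ xs, ∑ i, Q xs * (∏ j, P (xs i j) (y j)) ^ s := by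
              refine Finset.sum_congr rfl fun xs _ => ?_
              rw [Finset.mul_sum]
          _ = ∑ i, ∑ xs, Q xs * (∏ j, P (xs i j) (y j)) ^ s := Finset.sum_comm
          _ = ∑ i : Fin L, ∏ j, μ (y j) := by
              refine Finset.sum_congr rfl fun i _ => ?_
              rw [← hmarg i y]
              refine Finset.sum_congr rfl fun xs _ => ?_
              congr 1
              exact (Real.finset_prod_rpow Finset.univ (fun j => P (xs i j) (y j))
                (fun j _ => hPnonneg _ _) s).symm
          _ = (L : ℝ) * ∏ j, μ (y j) := by
              rw [Finset.sum_const, Finset.card_univ, Fintype.card_fin, nsmul_eq_mul]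
      rw [hmean]
    -- Step 4: factor everything into single-letter form
    have step4 : ∑ y : Fin N → 𝒴,
        (∏ j, P 0 (y j)) ^ s * ((L : ℝ) * ∏ j, μ (y j)) ^ γ
        = (L : ℝ) ^ γ * A ^ N := by
      have hterm : ∀ y : Fin N → 𝒴,
          (∏ j, P 0 (y j)) ^ s * ((L : ℝ) * ∏ j, μ (y j)) ^ γ
          = (L : ℝ) ^ γ * ∏ j, (P 0 (y j) ^ s * μ (y j) ^ γ) := by
        intro y
        have hμprod : 0 ≤ ∏ j, μ (y j) := Finset.prod_nonneg fun j _ => hμ0 (y j)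
        rw [Real.mul_rpow hL'.le hμprod,
          ← Real.finset_prod_rpow Finset.univ _ (fun j _ => hPnonneg 0 (y j)) s,
          ← Real.finset_prod_rpow Finset.univ _ (fun j _ => hμ0 (y j)) γ,
          Finset.prod_mul_distrib]
        ring
      calc ∑ y : Fin N → 𝒴, (∏ j, P 0 (y j)) ^ s * ((L : ℝ) * ∏ j, μ (y j)) ^ γ
          = ∑ y : Fin N → 𝒴, (L : ℝ) ^ γ * ∏ j, (P 0 (y j) ^ s * μ (y j) ^ γ) :=
            Finset.sum_congr rfl fun y _ => hterm y
        _ = (L : ℝ) ^ γ * ∑ y : Fin N → 𝒴, ∏ j, (P 0 (y j) ^ s * μ (y j) ^ γ) := by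
            rw [Finset.mul_sum]
        _ = (L : ℝ) ^ γ * A ^ N := by
            congr 1
            rw [hA, ← Fintype.prod_sum (fun _ : Fin N => fun z : 𝒴 => P 0 z ^ s * μ z ^ γ),
              Finset.prod_const, Finset.card_univ, Fintype.card_fin]
    -- Step 5: A ≤ 2^{-E0}
    have step5 : A ≤ (2 : ℝ) ^ (-(gallagerE0 P p γ)) := by
      rcases hA0.eq_or_lt with h0 | h0
      · have h : gallagerE0 P p γ = 0 := by rw [hE0, ← h0, Real.logb_zero, neg_zero]
        rw [h, neg_zero, Real.rpow_zero, ← h0]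
        exact zero_le_one
      · rw [hE0, neg_neg]
        exact le_of_eq (Real.rpow_logb (by norm_num) (by norm_num) h0).symm
    -- put it together
    have hfinal : F ≤ (L : ℝ) ^ γ * ((2 : ℝ) ^ (-(gallagerE0 P p γ))) ^ N := by
      refine (step2.trans_eq step4).trans ?_
      exact mul_le_mul_of_nonneg_left (pow_le_pow_left₀ hA0 step5 N)
        (Real.rpow_nonneg hL'.le γ)
    have heq : (L : ℝ) ^ γ * ((2 : ℝ) ^ (-(gallagerE0 P p γ))) ^ N
        = (2 : ℝ) ^ (-(N : ℝ) * (gallagerE0 P p γ - γ * R)) := by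
      have hLrw : (L : ℝ) ^ γ = (2 : ℝ) ^ (Real.logb 2 L * γ) := by
        rw [Real.rpow_mul (by norm_num : (0:ℝ) ≤ 2),
          Real.rpow_logb (by norm_num) (by norm_num) hL']
      have hpow : ((2 : ℝ) ^ (-(gallagerE0 P p γ))) ^ N
          = (2 : ℝ) ^ (-(gallagerE0 P p γ) * N) := by
        rw [Real.rpow_mul (by norm_num : (0:ℝ) ≤ 2), Real.rpow_natCast]
      rw [hLrw, hpow, ← Real.rpow_add (by norm_num : (0:ℝ) < 2)]
      congr 1
      rw [hR]
      field_simp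
      ring
    exact hfinal.trans_eq heq
  -- conclude using the supremum
  rcases hF0.eq_or_lt with h0 | h0
  · rw [← h0]
    positivity
  · have hne : ((fun γ => gallagerE0 P p γ - γ * R) '' Set.Icc (0:ℝ) 1).Nonempty :=
      (Set.nonempty_Icc.2 zero_le_one).image _
    have hub : ∀ v ∈ (fun γ => gallagerE0 P p γ - γ * R) '' Set.Icc (0:ℝ) 1,
        v ≤ -Real.logb 2 F / N := by
      rintro v ⟨γ, hγ, rfl⟩
      have hkey := key γ hγ
      have hlog : Real.logb 2 F ≤ -(N : ℝ) * (gallagerE0 P p γ - γ * R) := by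
        have := Real.logb_le_logb_of_le (one_lt_two) h0 hkey
        rwa [Real.logb_rpow (by norm_num) (by norm_num)] at this
      show gallagerE0 P p γ - γ * R ≤ -Real.logb 2 F / ↑N
      rw [le_div_iff₀ hN']
      nlinarith [hlog]
    have hsup : partialErrorExponent P p R ≤ -Real.logb 2 F / N := by
      rw [partialErrorExponent]
      exact csSup_le hne hub
    calc F = (2:ℝ) ^ (Real.logb 2 F) :=
          (Real.rpow_logb (by norm_num) (by norm_num) h0).symm
      _ ≤ (2:ℝ) ^ (-(N : ℝ) * partialErrorExponent P p R) := by
          apply Real.rpow_le_rpow_of_exponent_le one_le_two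
          have h2 : partialErrorExponent P p R * ↑N ≤ -Real.logb 2 F := by
            rw [← le_div_iff₀ hN']; exact hsup
          nlinarith [h2]
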